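/- arXiv:2603.15596 — 3 statements merged into one kernel-verified Lean document; each statement's English description precedes it below -/
import Mathlib

section
/- Let V be a d×d real symmetric positive definite matrix, β ≥ 0, and θ*, θ̂ ∈ ℝ^d with ‖θ̂ − θ*‖_V ≤ β. Let x*, x ∈ ℝ^d satisfy the UCB selection inequality ⟨x*, θ̂⟩ + β‖x*‖_{V^{-1}} ≤ ⟨x, θ̂⟩ + β‖x‖_{V^{-1}}. Then ⟨x*, θ*⟩ − ⟨x, θ*⟩ ≤ 2β‖x‖_{V^{-1}}. -/
open Matrix

/-- Cauchy–Schwarz for the Mahalanobis pairing. -/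
lemma mnorm_cs {d : ℕ} {V : Matrix (Fin d) (Fin d) ℝ} (hV : V.PosDef)
    (y z : Fin d → ℝ) :
    y ⬝ᵥ z ≤ Real.sqrt (z ⬝ᵥ V.mulVec z) * Real.sqrt (y ⬝ᵥ V⁻¹.mulVec y) := by
  have hVinv : V⁻¹.PosDef := hV.inv
  have hc : 0 ≤ z ⬝ᵥ V.mulVec z := by
    have := hV.posSemidef.dotProduct_mulVec_nonneg z; simpa using this
  have ha : 0 ≤ y ⬝ᵥ V⁻¹.mulVec y := by
    have := hVinv.posSemidef.dotProduct_mulVec_nonneg y; simpa using this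
  have hVVinv : V * V⁻¹ = 1 :=
    mul_nonsing_inv V (V.isUnit_iff_isUnit_det.mp hV.isUnit)
  have hVt : Vᵀ = V := by
    have := hV.isHermitian.eq
    rw [← conjTranspose_eq_transpose_of_trivial]; exact hV.isHermitian.eq
  set a := y ⬝ᵥ V⁻¹.mulVec y with ha_def
  set b := y ⬝ᵥ z with hb_def
  set c := z ⬝ᵥ V.mulVec z with hc_def
  have h1 : V *ᵥ (V⁻¹ *ᵥ y) = y := by
    rw [mulVec_mulVec, hVVinv, one_mulVec]
  have h2 : (V⁻¹ *ᵥ y) ⬝ᵥ (V *ᵥ z) = b := by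
    rw [dotProduct_mulVec, ← mulVec_transpose, hVt, mulVec_mulVec, hVVinv, one_mulVec]
  have h3 : (V⁻¹ *ᵥ y) ⬝ᵥ y = a := dotProduct_comm _ _
  have key : ∀ t : ℝ, 0 ≤ a * (t * t) + (2 * b) * t + c := by
    intro t
    have h0 := hV.posSemidef.dotProduct_mulVec_nonneg (z + t • V⁻¹.mulVec y)
    simp only [star_trivial, mulVec_add, mulVec_smul, dotProduct_add,
      add_dotProduct, dotProduct_smul, smul_dotProduct, smul_eq_mul, h1, h2, h3] at h0
    have h4 : z ⬝ᵥ y = b := dotProduct_comm z y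
    rw [h4] at h0
    linarith
  have hdisc := discrim_le_zero key
  have hb2 : b ^ 2 ≤ a * c := by
    unfold discrim at hdisc; nlinarith
  calc b ≤ |b| := le_abs_self b
    _ = Real.sqrt (b ^ 2) := (Real.sqrt_sq_eq_abs b).symm
    _ ≤ Real.sqrt (c * a) := Real.sqrt_le_sqrt (by nlinarith)
    _ = Real.sqrt c * Real.sqrt a := Real.sqrt_mul hc a

/-- Mahalanobis norm `‖x‖_A = √(xᵀ A x)`. -/
noncomputable def Mnorm {d : ℕ} (A : Matrix (Fin d) (Fin d) ℝ) (x : Fin d → ℝ) : ℝ :=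
  Real.sqrt (x ⬝ᵥ A.mulVec x)

lemma mnorm_neg {d : ℕ} (A : Matrix (Fin d) (Fin d) ℝ) (v : Fin d → ℝ) :
    Mnorm A (-v) = Mnorm A v := by
  unfold Mnorm
  rw [mulVec_neg, dotProduct_neg, neg_dotProduct, neg_neg]

/-- Per-round regret bound for UCB arm selection: if `‖θ̂ − θ*‖_V ≤ β` and
`⟨x*, θ̂⟩ + β‖x*‖_{V⁻¹} ≤ ⟨x, θ̂⟩ + β‖x‖_{V⁻¹}`, then
`⟨x*, θ*⟩ − ⟨x, θ*⟩ ≤ 2β‖x‖_{V⁻¹}`. -/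
theorem ucb_per_round_regret (d : ℕ)
    (V : Matrix (Fin d) (Fin d) ℝ) (hV : V.PosDef)
    (β : ℝ) (hβ : 0 ≤ β)
    (θstar θhat xstar x : Fin d → ℝ)
    (hconf : Mnorm V (θhat - θstar) ≤ β)
    (hucb : xstar ⬝ᵥ θhat + β * Mnorm V⁻¹ xstar ≤
      x ⬝ᵥ θhat + β * Mnorm V⁻¹ x) :
    xstar ⬝ᵥ θstar - x ⬝ᵥ θstar ≤ 2 * β * Mnorm V⁻¹ x := by
  have hx : 0 ≤ Mnorm V⁻¹ x := Real.sqrt_nonneg _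
  have hxs : 0 ≤ Mnorm V⁻¹ xstar := Real.sqrt_nonneg _
  have h1 : x ⬝ᵥ (θhat - θstar) ≤ β * Mnorm V⁻¹ x := by
    calc x ⬝ᵥ (θhat - θstar)
        ≤ Mnorm V (θhat - θstar) * Mnorm V⁻¹ x := mnorm_cs hV x (θhat - θstar)
      _ ≤ β * Mnorm V⁻¹ x := mul_le_mul_of_nonneg_right hconf hx
  have h2 : xstar ⬝ᵥ (θstar - θhat) ≤ β * Mnorm V⁻¹ xstar := by
    calc xstar ⬝ᵥ (θstar - θhat)
        ≤ Mnorm V (θstar - θhat) * Mnorm V⁻¹ xstar := mnorm_cs hV xstar (θstar - θhat)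
      _ = Mnorm V (θhat - θstar) * Mnorm V⁻¹ xstar := by
          rw [show θstar - θhat = -(θhat - θstar) by ring, mnorm_neg]
      _ ≤ β * Mnorm V⁻¹ xstar := mul_le_mul_of_nonneg_right hconf hxs
  rw [dotProduct_sub] at h1 h2
  linarith
end

section
/- Let t ≥ 1, ε ∈ (0,1], α > 0, κ > 0, τ_0 > 0, and C > 0. For s ∈ [t], let X_s ∈ ℝ^d with X_s ≠ 0, let V_{s−1} be symmetric positive definite, let c_s ∈ ℝ with Σ_{s=1}^t |c_s| ≤ C, and let σ_s > 0 satisfy σ_s ≥ √C κ^{-1/4} ‖X_s‖_{V_{s−1}^{-1}}^{1/2}. Set w_s = α^{-1/2}‖X_s/σ_s‖_{V_{s−1}^{-1}} and τ_s = τ_0 (√(1 + w_s²)/w_s) s^{(1−ε)/(2(1+ε))}. Then the number of rounds on which the corruption exceeds a quarter of the threshold is bounded: Σ_{s=1}^t 𝟙{ |c_s|/σ_s > τ_s/4 } ≤ 4√κ / (√α τ_0). -/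
open Matrix Finset
open scoped Classical

set_option maxHeartbeats 1000000 in
/-- Deterministic bound on the number of rounds on which the corruption exceeds
a quarter of the Huber threshold:
`Σ_{s=1}^t 𝟙{|c_s|/σ_s > τ_s/4} ≤ 4√κ/(√α τ₀)`. -/
theorem corruption_exceedance_count_bound (d t : ℕ) (ht : 1 ≤ t)
    (ε alpha κ τ0 C : ℝ) (hε : 0 < ε) (hε1 : ε ≤ 1)
    (halpha : 0 < alpha) (hκ : 0 < κ) (hτ0 : 0 < τ0) (hC : 0 < C)
    (X : ℕ → Fin d → ℝ) (hX : ∀ s ∈ Finset.Icc 1 t, X s ≠ 0)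
    (V : ℕ → Matrix (Fin d) (Fin d) ℝ)
    (hV : ∀ s ∈ Finset.Icc 1 t, (V (s - 1)).PosDef)
    (c σ w τ : ℕ → ℝ)
    (hc : ∑ s ∈ Finset.Icc 1 t, |c s| ≤ C)
    (hσpos : ∀ s ∈ Finset.Icc 1 t, 0 < σ s)
    (hσ : ∀ s ∈ Finset.Icc 1 t,
      Real.sqrt C * κ ^ (-(1 / 4 : ℝ)) *
        Mnorm (V (s - 1))⁻¹ (X s) ^ ((1 : ℝ) / 2) ≤ σ s)
    (hw : ∀ s ∈ Finset.Icc 1 t,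
      w s = (Real.sqrt alpha)⁻¹ * Mnorm (V (s - 1))⁻¹ ((σ s)⁻¹ • X s))
    (hτ : ∀ s ∈ Finset.Icc 1 t,
      τ s = τ0 * (Real.sqrt (1 + w s ^ 2) / w s) *
        (s : ℝ) ^ ((1 - ε) / (2 * (1 + ε)))) :
    ∑ s ∈ Finset.Icc 1 t, (if |c s| / σ s > τ s / 4 then (1 : ℝ) else 0) ≤
      4 * Real.sqrt κ / (Real.sqrt alpha * τ0) := by
  have hsqa : 0 < Real.sqrt alpha := Real.sqrt_pos.2 halpha
  have hsqκ : 0 < Real.sqrt κ := Real.sqrt_pos.2 hκ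
  set K : ℝ := 4 * Real.sqrt κ / (C * Real.sqrt alpha * τ0) with hK
  have hKpos : 0 < K := by positivity
  have key : ∀ s ∈ Finset.Icc 1 t,
      (if |c s| / σ s > τ s / 4 then (1 : ℝ) else 0) ≤ K * |c s| := by
    intro s hs
    have hσs : 0 < σ s := hσpos s hs
    set A := (V (s - 1))⁻¹ with hA
    have hApd : A.PosDef := (hV s hs).inv
    have hq : 0 < X s ⬝ᵥ A.mulVec (X s) := by
      have := hApd.dotProduct_mulVec_pos (hX s hs); simpa using this
    set M : ℝ := Mnorm A (X s) with hMdef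
    have hM : 0 < M := Real.sqrt_pos.2 hq
    -- w s = M / (√α σ s)
    have hws : w s = M / (Real.sqrt alpha * σ s) := by
      rw [hw s hs]
      have hsm : Mnorm A ((σ s)⁻¹ • X s) = |(σ s)⁻¹| * M := by
        unfold Mnorm
        have h : ((σ s)⁻¹ • X s) ⬝ᵥ A.mulVec ((σ s)⁻¹ • X s)
            = ((σ s)⁻¹) ^ 2 * (X s ⬝ᵥ A.mulVec (X s)) := by
          simp [Matrix.mulVec_smul, dotProduct_smul, smul_dotProduct, smul_eq_mul]
          ring
        rw [h, Real.sqrt_mul (sq_nonneg _), Real.sqrt_sq_eq_abs]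
        rfl
      rw [hsm, abs_of_pos (inv_pos.2 hσs)]
      field_simp
    have hwpos : 0 < w s := by
      rw [hws]; positivity
    -- σ s ^ 2 ≥ C * M / √κ
    have hσ2 : C * M / Real.sqrt κ ≤ σ s ^ 2 := by
      have h1 := hσ s hs
      have hlhs : Real.sqrt C * κ ^ (-(1 / 4 : ℝ)) * M ^ ((1 : ℝ) / 2)
          = Real.sqrt (C * M / Real.sqrt κ) := by
        rw [Real.sqrt_div' , ]
        · rw [Real.sqrt_mul hC.le, Real.sqrt_eq_rpow M]
          have : κ ^ (-(1 / 4 : ℝ)) = (Real.sqrt (Real.sqrt κ))⁻¹ := by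
            rw [Real.sqrt_eq_rpow, Real.sqrt_eq_rpow, ← Real.rpow_mul hκ.le,
              ← Real.rpow_neg_one ((κ : ℝ) ^ ((1:ℝ)/2 * (1/2)))]
            rw [← Real.rpow_mul hκ.le]
            norm_num
          rw [this]
          ring
        · positivity
      have hnn : 0 ≤ Real.sqrt C * κ ^ (-(1 / 4 : ℝ)) * M ^ ((1 : ℝ) / 2) := by positivity
      have := sq_le_sq' (by linarith [hnn, h1, neg_nonpos_of_nonneg (le_trans hnn h1)]) h1
      calc C * M / Real.sqrt κ
          = Real.sqrt (C * M / Real.sqrt κ) ^ 2 := by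
            rw [Real.sq_sqrt (by positivity)]
        _ = (Real.sqrt C * κ ^ (-(1 / 4 : ℝ)) * M ^ ((1 : ℝ) / 2)) ^ 2 := by rw [hlhs]
        _ ≤ σ s ^ 2 := by nlinarith [h1, hnn]
    -- σ s * τ s ≥ σ s ^2 * √α * τ0 / M ≥ C √α τ0 / √κ
    have hτlb : τ0 / w s ≤ τ s := by
      rw [hτ s hs]
      have h1 : (1 : ℝ) ≤ Real.sqrt (1 + w s ^ 2) := by
        nlinarith [Real.sq_sqrt (show (0:ℝ) ≤ 1 + w s ^ 2 by positivity),
          Real.sqrt_nonneg (1 + w s ^ 2)]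
      have h2 : (1 : ℝ) ≤ (s : ℝ) ^ ((1 - ε) / (2 * (1 + ε))) := by
        apply Real.one_le_rpow
        · exact_mod_cast (Finset.mem_Icc.1 hs).1
        · apply div_nonneg (by linarith) (by linarith)
      have h3 : τ0 / w s ≤ τ0 * (Real.sqrt (1 + w s ^ 2) / w s) := by
        rw [← mul_div_assoc]
        exact (div_le_div_iff_of_pos_right hwpos).2 (by nlinarith)
      calc τ0 / w s ≤ τ0 * (Real.sqrt (1 + w s ^ 2) / w s) := h3
        _ ≤ τ0 * (Real.sqrt (1 + w s ^ 2) / w s) * (s : ℝ) ^ ((1 - ε) / (2 * (1 + ε))) := by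
            nlinarith [mul_pos hτ0 (div_pos (lt_of_lt_of_le one_pos h1) hwpos)]
    have hKστ : 4 ≤ K * (σ s * τ s) := by
      have h0 : τ0 / w s = σ s * Real.sqrt alpha * τ0 / M := by
        rw [hws]; field_simp
      have h1 : σ s * (σ s * Real.sqrt alpha * τ0 / M) ≤ σ s * τ s := by
        rw [← h0]
        exact mul_le_mul_of_nonneg_left hτlb hσs.le
      have hCM : C * M ≤ σ s ^ 2 * Real.sqrt κ := by
        rw [div_le_iff₀ hsqκ] at hσ2; linarith
      have h2 : C * Real.sqrt alpha * τ0 / Real.sqrt κ ≤ σ s * τ s := by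
        refine le_trans ?_ h1
        have hR : σ s * (σ s * Real.sqrt alpha * τ0 / M)
            = σ s ^ 2 * Real.sqrt alpha * τ0 / M := by ring
        rw [hR, div_le_div_iff₀ hsqκ hM]
        calc C * Real.sqrt alpha * τ0 * M
            = (Real.sqrt alpha * τ0) * (C * M) := by ring
          _ ≤ (Real.sqrt alpha * τ0) * (σ s ^ 2 * Real.sqrt κ) :=
              mul_le_mul_of_nonneg_left hCM (by positivity)
          _ = σ s ^ 2 * Real.sqrt alpha * τ0 * Real.sqrt κ := by ring
      have h4 : K * (C * Real.sqrt alpha * τ0 / Real.sqrt κ) = 4 := by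
        rw [hK]; field_simp
      calc (4 : ℝ) = K * (C * Real.sqrt alpha * τ0 / Real.sqrt κ) := h4.symm
        _ ≤ K * (σ s * τ s) := mul_le_mul_of_nonneg_left h2 hKpos.le
    by_cases hcase : |c s| / σ s > τ s / 4
    · rw [if_pos hcase]
      have hτpos : 0 < τ s := lt_of_lt_of_le (by positivity) hτlb
      have h4c : σ s * τ s < 4 * |c s| := by
        rw [gt_iff_lt, div_lt_div_iff₀ (by norm_num) hσs] at hcase
        nlinarith
      have h5 := mul_lt_mul_of_pos_left h4c hKpos
      nlinarith [h5, hKστ]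
    · rw [if_neg hcase]
      positivity
  calc ∑ s ∈ Finset.Icc 1 t, (if |c s| / σ s > τ s / 4 then (1 : ℝ) else 0)
      ≤ ∑ s ∈ Finset.Icc 1 t, K * |c s| := Finset.sum_le_sum key
    _ = K * ∑ s ∈ Finset.Icc 1 t, |c s| := by rw [Finset.mul_sum]
    _ ≤ K * C := mul_le_mul_of_nonneg_left hc hKpos.le
    _ = 4 * Real.sqrt κ / (Real.sqrt alpha * τ0) := by
        rw [hK]; field_simp
end

section
/- Let t ≥ 1, κ > 0, and C > 0. For s ∈ [t], let X_s ∈ ℝ^d, let V_{s−1} be symmetric positive definite, let c_s ∈ ℝ with Σ_{s=1}^t |c_s| ≤ C, let σ_s > 0 satisfy σ_s ≥ √C κ^{-1/4} ‖X_s‖_{V_{s−1}^{-1}}^{1/2}, and let θ̂_s, θ* ∈ ℝ^d and β_{s−1} ≥ 0 satisfy ‖θ̂_s − θ*‖_{V_{s−1}} ≤ β_{s−1}. Then | Σ_{s=1}^t (|c_s|/σ_s) ⟨X_s/σ_s, θ̂_s − θ*⟩ | ≤ √κ · max_{u ∈ [t+1]} β_{u−1}. -/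
open Matrix Finset

lemma abs_dotProduct_le {n : ℕ} (u v : Fin n → ℝ) :
    |u ⬝ᵥ v| ≤ Real.sqrt (u ⬝ᵥ u) * Real.sqrt (v ⬝ᵥ v) := by
  have h := Finset.sum_mul_sq_le_sq_mul_sq Finset.univ u v
  have hu : u ⬝ᵥ u = ∑ i : Fin n, u i ^ 2 := by simp [dotProduct, pow_two]
  have hv : v ⬝ᵥ v = ∑ i : Fin n, v i ^ 2 := by simp [dotProduct, pow_two]
  have habs : |u ⬝ᵥ v| = Real.sqrt ((u ⬝ᵥ v) ^ 2) := (Real.sqrt_sq_eq_abs _).symm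
  rw [habs, hu, hv, ← Real.sqrt_mul (Finset.sum_nonneg fun i _ => sq_nonneg _)]
  apply Real.sqrt_le_sqrt
  simpa [dotProduct] using h

lemma mahalanobis_cs {d : ℕ} {A : Matrix (Fin d) (Fin d) ℝ} (hA : A.PosDef)
    (x y : Fin d → ℝ) : |x ⬝ᵥ y| ≤ Mnorm A⁻¹ x * Mnorm A y := by
  classical
  obtain ⟨B, hB, hBB⟩ : ∃ B : Matrix (Fin d) (Fin d) ℝ, B.PosSemidef ∧ B * B = A := by
    open scoped MatrixOrder in
    exact ⟨CFC.sqrt A, (CFC.sqrt_nonneg A).posSemidef,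
      CFC.sqrt_mul_sqrt_self A hA.posSemidef.nonneg⟩
  have hBsymm : Bᵀ = B := hB.isHermitian.eq
  have hdet : IsUnit B.det := by
    have : B.det * B.det = A.det := by rw [← det_mul, hBB]
    have hApos := hA.det_pos
    refine isUnit_iff_ne_zero.mpr fun h => ?_
    rw [h, mul_zero] at this
    exact hApos.ne' this.symm
  have hinv : B⁻¹ * B = 1 := nonsing_inv_mul B hdet
  have hBinvsymm : (B⁻¹)ᵀ = B⁻¹ := by rw [transpose_nonsing_inv, hBsymm]
  have key1 : (B⁻¹ *ᵥ x) ⬝ᵥ (B *ᵥ y) = x ⬝ᵥ y := by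
    rw [← hBinvsymm, mulVec_transpose, ← dotProduct_mulVec, mulVec_mulVec, hinv, one_mulVec]
  have key2 : (B⁻¹ *ᵥ x) ⬝ᵥ (B⁻¹ *ᵥ x) = x ⬝ᵥ A⁻¹ *ᵥ x := by
    nth_rewrite 1 [← hBinvsymm]
    rw [mulVec_transpose, ← dotProduct_mulVec, mulVec_mulVec]
    congr 2
    rw [← hBB, Matrix.mul_inv_rev]
  have key3 : (B *ᵥ y) ⬝ᵥ (B *ᵥ y) = y ⬝ᵥ A *ᵥ y := by
    nth_rewrite 1 [← hBsymm]
    rw [mulVec_transpose, ← dotProduct_mulVec, mulVec_mulVec, hBB]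
  rw [← key1]
  calc |(B⁻¹ *ᵥ x) ⬝ᵥ (B *ᵥ y)|
      ≤ Real.sqrt ((B⁻¹ *ᵥ x) ⬝ᵥ (B⁻¹ *ᵥ x)) * Real.sqrt ((B *ᵥ y) ⬝ᵥ (B *ᵥ y)) :=
        abs_dotProduct_le _ _
    _ = Mnorm A⁻¹ x * Mnorm A y := by rw [key2, key3]; rfl

/-- Deterministic bound on the corruption-dependent part of the
self-regularization term:
`|Σ_{s=1}^t (|c_s|/σ_s) ⟨X_s/σ_s, θ̂_s − θ*⟩| ≤ √κ · max_{u ∈ [t+1]} β_{u−1}`. -/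
theorem corruption_self_regularization_bound (d t : ℕ) (ht : 1 ≤ t)
    (κ C : ℝ) (hκ : 0 < κ) (hC : 0 < C)
    (X : ℕ → Fin d → ℝ) (V : ℕ → Matrix (Fin d) (Fin d) ℝ)
    (hV : ∀ s ∈ Finset.Icc 1 t, (V (s - 1)).PosDef)
    (c σ : ℕ → ℝ) (θstar : Fin d → ℝ) (hatθ : ℕ → Fin d → ℝ) (β : ℕ → ℝ)
    (hc : ∑ s ∈ Finset.Icc 1 t, |c s| ≤ C)
    (hσpos : ∀ s ∈ Finset.Icc 1 t, 0 < σ s)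
    (hσ : ∀ s ∈ Finset.Icc 1 t,
      Real.sqrt C * κ ^ (-(1 / 4 : ℝ)) *
        Mnorm (V (s - 1))⁻¹ (X s) ^ ((1 : ℝ) / 2) ≤ σ s)
    (hβ : ∀ s ∈ Finset.Icc 1 t, 0 ≤ β (s - 1))
    (hconf : ∀ s ∈ Finset.Icc 1 t,
      Mnorm (V (s - 1)) (hatθ s - θstar) ≤ β (s - 1)) :
    |∑ s ∈ Finset.Icc 1 t,
        (|c s| / σ s) * (((σ s)⁻¹ • X s) ⬝ᵥ (hatθ s - θstar))| ≤
      Real.sqrt κ *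
        (Finset.Icc 1 (t + 1)).sup' (Finset.nonempty_Icc.mpr (by omega))
          (fun u => β (u - 1)) := by
  have hne : (Finset.Icc 1 (t + 1)).Nonempty := Finset.nonempty_Icc.mpr (by omega)
  set K := Real.sqrt κ with hKdef
  have hK : 0 < K := Real.sqrt_pos.mpr hκ
  set Bmax := (Finset.Icc 1 (t + 1)).sup' hne (fun u => β (u - 1)) with hBmaxdef
  have hBmax : ∀ s ∈ Finset.Icc 1 t, β (s - 1) ≤ Bmax := by
    intro s hs
    have hmem : s ∈ Finset.Icc 1 (t + 1) := by
      rw [Finset.mem_Icc] at hs ⊢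
      omega
    exact Finset.le_sup' (fun u => β (u - 1)) hmem
  have h1t : (1 : ℕ) ∈ Finset.Icc 1 t := Finset.mem_Icc.mpr ⟨le_refl 1, ht⟩
  have hB0 : 0 ≤ Bmax := le_trans (hβ 1 h1t) (hBmax 1 h1t)
  have hterm : ∀ s ∈ Finset.Icc 1 t,
      |(|c s| / σ s) * (((σ s)⁻¹ • X s) ⬝ᵥ (hatθ s - θstar))| ≤
        |c s| * (K / C * Bmax) := by
    intro s hs
    have hVs := hV s hs
    have hσs := hσpos s hs
    set m := Mnorm (V (s - 1))⁻¹ (X s) with hmdef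
    have hm0 : 0 ≤ m := Real.sqrt_nonneg _
    have hcs : |X s ⬝ᵥ (hatθ s - θstar)| ≤ m * β (s - 1) :=
      le_trans (mahalanobis_cs hVs _ _)
        (mul_le_mul_of_nonneg_left (hconf s hs) hm0)
    -- σ² bound
    have e1 : Real.sqrt C * Real.sqrt C = C := Real.mul_self_sqrt hC.le
    have e2 : κ ^ (-(1/4 : ℝ)) * κ ^ (-(1/4 : ℝ)) = κ ^ (-(1/2 : ℝ)) := by
      rw [← Real.rpow_add hκ]; norm_num
    have e3 : m ^ ((1:ℝ)/2) * m ^ ((1:ℝ)/2) = m := by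
      rw [← Real.rpow_add' hm0 (by norm_num : (1:ℝ)/2 + 1/2 ≠ 0)]
      norm_num
    have hlhs0 : 0 ≤ Real.sqrt C * κ ^ (-(1/4 : ℝ)) * m ^ ((1:ℝ)/2) := by
      have : (0:ℝ) ≤ κ ^ (-(1/4 : ℝ)) := Real.rpow_nonneg hκ.le _
      have : (0:ℝ) ≤ m ^ ((1:ℝ)/2) := Real.rpow_nonneg hm0 _
      positivity
    have hσ2 : C * κ ^ (-(1/2 : ℝ)) * m ≤ σ s ^ 2 := by
      have h1 := hσ s hs
      have hmul := mul_self_le_mul_self hlhs0 h1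
      calc C * κ ^ (-(1/2 : ℝ)) * m
          = (Real.sqrt C * Real.sqrt C) * (κ ^ (-(1/4 : ℝ)) * κ ^ (-(1/4 : ℝ))) *
              (m ^ ((1:ℝ)/2) * m ^ ((1:ℝ)/2)) := by rw [e1, e2, e3]
        _ = (Real.sqrt C * κ ^ (-(1/4 : ℝ)) * m ^ ((1:ℝ)/2)) *
              (Real.sqrt C * κ ^ (-(1/4 : ℝ)) * m ^ ((1:ℝ)/2)) := by ring
        _ ≤ σ s * σ s := hmul
        _ = σ s ^ 2 := (sq (σ s)).symm
    have eK : κ ^ (-(1/2 : ℝ)) = K⁻¹ := by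
      rw [Real.rpow_neg hκ.le, hKdef, Real.sqrt_eq_rpow]
    rw [eK] at hσ2
    have hm : m ≤ σ s ^ 2 * (K / C) := by
      have h := mul_le_mul_of_nonneg_right hσ2 (le_of_lt (div_pos hK hC))
      have heq : C * K⁻¹ * m * (K / C) = m := by
        field_simp
      rw [heq] at h
      exact h
    have hdot : ((σ s)⁻¹ • X s) ⬝ᵥ (hatθ s - θstar) =
        (σ s)⁻¹ * (X s ⬝ᵥ (hatθ s - θstar)) := smul_dotProduct _ _ _
    rw [hdot, abs_mul, abs_mul, abs_div, abs_abs, abs_of_pos hσs,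
      abs_inv, abs_of_pos hσs]
    have hβs := hβ s hs
    have hBs := hBmax s hs
    calc |c s| / σ s * ((σ s)⁻¹ * |X s ⬝ᵥ (hatθ s - θstar)|)
        ≤ |c s| / σ s * ((σ s)⁻¹ * (m * β (s - 1))) := by
          gcongr
      _ ≤ |c s| / σ s * ((σ s)⁻¹ * ((σ s ^ 2 * (K / C)) * Bmax)) := by
          gcongr
      _ = |c s| * (K / C * Bmax) := by
          field_simp
  calc |∑ s ∈ Finset.Icc 1 t,
          (|c s| / σ s) * (((σ s)⁻¹ • X s) ⬝ᵥ (hatθ s - θstar))|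
      ≤ ∑ s ∈ Finset.Icc 1 t,
          |(|c s| / σ s) * (((σ s)⁻¹ • X s) ⬝ᵥ (hatθ s - θstar))| :=
        Finset.abs_sum_le_sum_abs _ _
    _ ≤ ∑ s ∈ Finset.Icc 1 t, |c s| * (K / C * Bmax) := Finset.sum_le_sum hterm
    _ = (∑ s ∈ Finset.Icc 1 t, |c s|) * (K / C * Bmax) := by
        rw [Finset.sum_mul]
    _ ≤ C * (K / C * Bmax) := by
        apply mul_le_mul_of_nonneg_right hc
        positivity
    _ = K * Bmax := by field_simp
end
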